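/- For the double star DS_{p,q} with p, q ≥ 1 (the tree obtained by joining the centers of stars K_{1,p} and K_{1,q}, which has n = p + q + 2 vertices), the middle 3-rainbow domination number is γ*_{r3}(DS_{p,q}) = p + q + 3 = n + 1. -/

import Mathlib

open SimpleGraph Finset

/-- A `k`-rainbow dominating function on a graph `H`. -/
def IsRDF {W : Type*} (H : SimpleGraph W) (k : ℕ) (f : W → Finset (Fin k)) : Prop :=
  ∀ w, f w = ∅ → ∀ c : Fin k, ∃ u, H.Adj w u ∧ c ∈ f u

/-- The weight of a rainbow dominating function. -/
noncomputable def rdfWeight {W : Type*} [Fintype W] {k : ℕ} (f : W → Finset (Fin k)) : ℕ :=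
  ∑ w, (f w).card

/-- The `k`-rainbow domination number of a graph. -/
noncomputable def rdn {W : Type*} [Fintype W] (H : SimpleGraph W) (k : ℕ) : ℕ :=
  sInf {n | ∃ f : W → Finset (Fin k), IsRDF H k f ∧ rdfWeight f = n}

/-- The middle graph of `G`, on vertex set `V(G) ⊕ E(G)`. -/
def middleGraph {V : Type*} (G : SimpleGraph V) : SimpleGraph (V ⊕ G.edgeSet) where
  Adj x y :=
    match x, y with
    | Sum.inl _, Sum.inl _ => False
    | Sum.inl v, Sum.inr e => v ∈ (e : Sym2 V)
    | Sum.inr e, Sum.inl v => v ∈ (e : Sym2 V)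
    | Sum.inr e, Sum.inr f => e ≠ f ∧ ∃ v, v ∈ (e : Sym2 V) ∧ v ∈ (f : Sym2 V)
  symm := by
    refine ⟨?_⟩
    rintro (v | e) (w | f) h
    · exact h.elim
    · exact h
    · exact h
    · exact ⟨Ne.symm h.1, h.2.imp fun v hv => ⟨hv.2, hv.1⟩⟩
  loopless := by
    refine ⟨?_⟩
    rintro (v | e) h
    · exact h.elim
    · exact h.1 rfl

/-- The middle `k`-rainbow domination number `γ*_{rk}(G)`. -/
noncomputable def mrdn {V : Type*} [Fintype V] (G : SimpleGraph V) (k : ℕ) : ℕ :=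
  letI := Classical.decEq V
  letI : DecidableRel G.Adj := fun _ _ => Classical.dec _
  rdn (middleGraph G) k

/-- The `k`-rainbow domatic number: the maximum size of a family of `k`-rainbow
dominating functions with `∑ i |f i v| ≤ k` for each vertex `v`. -/
noncomputable def rdomatic {W : Type*} (H : SimpleGraph W) (k : ℕ) : ℕ :=
  sSup {d | ∃ F : Fin d → W → Finset (Fin k), Function.Injective F ∧
    (∀ i, IsRDF H k (F i)) ∧ ∀ w, (∑ i, (F i w).card) ≤ k}

/-- The matching number `α'(G)`. -/
noncomputable def matchingNumber {V : Type*} [Fintype V] (G : SimpleGraph V) : ℕ :=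
  sSup {n | ∃ M : Finset (Sym2 V), ↑M ⊆ G.edgeSet ∧
    (∀ e ∈ M, ∀ f ∈ M, e ≠ f → ∀ v : V, ¬(v ∈ e ∧ v ∈ f)) ∧ M.card = n}

/-- The double star `DS_{p,q}` on `p+q+2` vertices, with centers `0` and `1`,
the leaves of center `0` being `2, …, p+1` and those of center `1` being `p+2, …, p+q+1`. -/
def doubleStar (p q : ℕ) : SimpleGraph (Fin (p + q + 2)) :=
  fromEdgeSet (({s(0, 1)} : Set (Sym2 (Fin (p + q + 2)))) ∪
    {e | ∃ i : Fin (p + q + 2),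
      (2 ≤ i.val ∧ i.val < p + 2 ∧ e = s(0, i)) ∨ (p + 2 ≤ i.val ∧ e = s(1, i))})

/-!
Upper bound: give the central edge `s(0, 1)` all three colours and every leaf one colour.

Lower bound: in the middle graph a leaf `l` is adjacent only to its pendant edge `e l`, so either
`l` is coloured or `e l` carries all three colours; in both cases the pair `{l, e l}` has weight at
least `1 + min |f (e l)| 2`. Three more colours must lie on the two centers, the central edge and
these surpluses: an uncoloured center forces three colours on the central edge and its own pendant
edges, an uncoloured central edge forces three colours on the centers and all pendant edges, and
capping each pendant edge at two colours still leaves enough in every case.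
-/

theorem Finset.min_sum_le_sum_min {ι : Type*} (s : Finset ι) (x : ι → ℕ) (c : ℕ) :
    min (∑ i ∈ s, x i) c ≤ ∑ i ∈ s, min (x i) c := by
  induction s using Finset.cons_induction with
  | empty => simp
  | cons a s ha ih => rw [sum_cons, sum_cons]; omega

section RainbowDomination

variable {W : Type*} {H : SimpleGraph W} {k : ℕ} {f : W → Finset (Fin k)}

theorem IsRDF.le_sum_card (hf : IsRDF H k f) {w : W} (hw : f w = ∅) {N : Finset W}
    (hN : ∀ u, H.Adj w u → u ∈ N) : k ≤ ∑ u ∈ N, #(f u) :=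
  calc k = #(univ : Finset (Fin k)) := by simp
    _ ≤ #(N.biUnion f) := card_le_card fun c _ =>
        let ⟨u, hu, hc⟩ := hf w hw c
        mem_biUnion.2 ⟨u, hN u hu, hc⟩
    _ ≤ _ := card_biUnion_le

theorem rdn_eq_of_isRDF [Fintype W] {n : ℕ} (hf : IsRDF H k f) (hn : rdfWeight f = n)
    (hmin : ∀ g, IsRDF H k g → n ≤ rdfWeight g) : rdn H k = n :=
  le_antisymm (Nat.sInf_le ⟨f, hf, hn⟩)
    (le_csInf ⟨n, f, hf, hn⟩ fun _ ⟨g, hg, hm⟩ => hm ▸ hmin g hg)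

end RainbowDomination

section MiddleGraph

variable {V : Type*} {G : SimpleGraph V}

@[simp]
theorem middleGraph_adj_inl_inl {v w : V} : ¬(middleGraph G).Adj (.inl v) (.inl w) := id

@[simp]
theorem middleGraph_adj_inl_inr {v : V} {e : G.edgeSet} :
    (middleGraph G).Adj (.inl v) (.inr e) ↔ v ∈ (e : Sym2 V) := Iff.rfl

@[simp]
theorem middleGraph_adj_inr_inl {v : V} {e : G.edgeSet} :
    (middleGraph G).Adj (.inr e) (.inl v) ↔ v ∈ (e : Sym2 V) := Iff.rfl

def dominatingEdgeRDF [DecidableEq V] {k : ℕ} (c : G.edgeSet) (a : Fin k) :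
    V ⊕ G.edgeSet → Finset (Fin k)
  | .inl v => if v ∈ (c : Sym2 V) then ∅ else {a}
  | .inr e => if e = c then univ else ∅

variable [DecidableEq V] {c : G.edgeSet} (a : Fin k)

theorem isRDF_dominatingEdgeRDF (hc : ∀ e ∈ G.edgeSet, ∃ v ∈ (c : Sym2 V), v ∈ e) :
    IsRDF (middleGraph G) k (dominatingEdgeRDF c a) := by
  rintro (v | e) hw b <;> refine ⟨.inr c, ?_, by simp [dominatingEdgeRDF]⟩
  · simpa [dominatingEdgeRDF] using hw
  · have hec : e ≠ c := by
      rintro rfl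
      simp only [dominatingEdgeRDF, if_pos] at hw
      exact notMem_empty b (hw ▸ mem_univ b)
    obtain ⟨v, hvc, hve⟩ := hc e e.2
    exact ⟨hec, v, hve, hvc⟩

theorem rdfWeight_dominatingEdgeRDF [Fintype V] [Fintype G.edgeSet] :
    rdfWeight (dominatingEdgeRDF c a) = Fintype.card V - 2 + k := by
  obtain ⟨c, hc⟩ := c
  induction c using Sym2.ind with
  | h x y =>
  have hxy : x ≠ y := G.ne_of_adj hc
  have hout : univ.filter (fun v => v ∉ s(x, y)) = ({x, y} : Finset V)ᶜ := by ext; simp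
  simp only [rdfWeight, Fintype.sum_sum_type, dominatingEdgeRDF, apply_ite card, card_empty,
    card_singleton, card_univ, Fintype.card_fin, sum_ite_eq', mem_univ, if_true]
  rw [sum_ite, sum_const_zero, zero_add, sum_const, smul_eq_mul, mul_one, hout, card_compl,
    card_pair hxy]

end MiddleGraph

namespace DoubleStar

variable {p q : ℕ}

/-- The center a vertex hangs from; each center is assigned the other one, so that every edge of
`doubleStar p q` is `s(hub i, i)` for exactly one `i ≠ 0`. -/
def hub (i : Fin (p + q + 2)) : Fin (p + q + 2) := if i = 0 ∨ p + 2 ≤ i.val then 1 else 0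

def leaves (p q : ℕ) : Finset (Fin (p + q + 2)) := {0, 1}ᶜ

@[simp]
theorem mem_leaves {i : Fin (p + q + 2)} : i ∈ leaves p q ↔ i ≠ 0 ∧ i ≠ 1 := by
  simp [leaves]

theorem card_leaves : #(leaves p q) = p + q := by
  rw [leaves, card_compl, card_pair zero_ne_one]; simp

theorem two_le_val_iff {i : Fin (p + q + 2)} : 2 ≤ i.val ↔ i ≠ 0 ∧ i ≠ 1 := by
  simp only [Ne, Fin.ext_iff, Fin.val_zero, Fin.val_one]; omega

theorem hub_of_lt {i : Fin (p + q + 2)} (h0 : i ≠ 0) (hi : i.val < p + 2) : hub i = 0 := by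
  simp [hub, h0, hi]

theorem hub_of_le {i : Fin (p + q + 2)} (hi : p + 2 ≤ i.val) : hub i = 1 := by
  simp [hub, hi]

theorem hub_one : hub (1 : Fin (p + q + 2)) = 0 := hub_of_lt one_ne_zero (by simp)

theorem hub_eq_zero_or_one (i : Fin (p + q + 2)) : hub i = 0 ∨ hub i = 1 := by
  unfold hub; split_ifs <;> simp

theorem hub_notMem_leaves (i : Fin (p + q + 2)) : hub i ∉ leaves p q := by
  rcases hub_eq_zero_or_one i with h | h <;> simp [h]

theorem hub_ne_self (i : Fin (p + q + 2)) : hub i ≠ i := by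
  unfold hub; split_ifs with h <;> rintro rfl <;> simp at h

theorem mem_edgeSet_iff {e : Sym2 (Fin (p + q + 2))} :
    e ∈ (doubleStar p q).edgeSet ↔ ∃ i ≠ 0, s(hub i, i) = e := by
  simp only [doubleStar, edgeSet_fromEdgeSet, Set.mem_sdiff, Set.mem_union,
    Set.mem_singleton_iff, Set.mem_ofPred_eq, Sym2.mem_diagSet]
  constructor
  · rintro ⟨rfl | ⟨i, ⟨h2, hp, rfl⟩ | ⟨hp, rfl⟩⟩, -⟩
    · exact ⟨1, one_ne_zero, by rw [hub_one]⟩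
    · have hi : i ≠ 0 := (two_le_val_iff.1 h2).1
      exact ⟨i, hi, by rw [hub_of_lt hi hp]⟩
    · exact ⟨i, (two_le_val_iff.1 (by omega)).1, by rw [hub_of_le hp]⟩
  · rintro ⟨i, hi, rfl⟩
    refine ⟨?_, by simpa using hub_ne_self i⟩
    by_cases hp : i.val < p + 2
    · rw [hub_of_lt hi hp]
      by_cases h1 : i = 1
      · exact .inl (h1 ▸ rfl)
      · exact .inr ⟨i, .inl ⟨two_le_val_iff.2 ⟨hi, h1⟩, hp, rfl⟩⟩
    · exact .inr ⟨i, .inr ⟨by omega, by rw [hub_of_le (by omega)]⟩⟩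

def hubEdge (i : Fin (p + q + 2)) : (doubleStar p q).edgeSet :=
  ⟨s(hub i, i), mem_edgeSet_iff.2 <| by
    by_cases hi : i = 0
    · exact ⟨1, one_ne_zero, by simp [hi, hub, Sym2.eq_swap]⟩
    · exact ⟨i, hi, rfl⟩⟩

theorem exists_hubEdge_eq (e : (doubleStar p q).edgeSet) : ∃ i ≠ 0, hubEdge i = e := by
  obtain ⟨i, hi, he⟩ := mem_edgeSet_iff.1 e.2
  exact ⟨i, hi, Subtype.ext he⟩

theorem hubEdge_injOn : Set.InjOn (hubEdge (p := p) (q := q)) {i | i ≠ 0} := by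
  intro i hi j hj h
  rcases Sym2.eq_iff.1 (congrArg Subtype.val h) with ⟨-, rfl⟩ | ⟨rfl, hij⟩
  · rfl
  · rw [(hub_eq_zero_or_one i).resolve_left hj, hub_one] at hij
    exact absurd hij hi

theorem hubEdge_one_meets :
    ∀ e ∈ (doubleStar p q).edgeSet,
      ∃ v ∈ ((hubEdge 1 : (doubleStar p q).edgeSet) : Sym2 (Fin (p + q + 2))), v ∈ e := by
  intro e he
  obtain ⟨i, -, rfl⟩ := mem_edgeSet_iff.1 he
  refine ⟨hub i, ?_, Sym2.mem_mk_left _ _⟩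
  rcases hub_eq_zero_or_one i with h | h <;> simp [hubEdge, h, hub_one]

theorem sum_leaves_eq (φ : Fin (p + q + 2) → ℕ) :
    ∑ i ∈ leaves p q, φ i =
      ∑ i ∈ leaves p q with hub i = 0, φ i + ∑ i ∈ leaves p q with hub i = 1, φ i := by
  rw [← sum_fiberwise_of_maps_to (t := {0, 1}) (g := hub) (fun i _ => by
    simpa using hub_eq_zero_or_one i), sum_pair zero_ne_one]

theorem sum_le_rdfWeight [Fintype (doubleStar p q).edgeSet]
    (f : Fin (p + q + 2) ⊕ (doubleStar p q).edgeSet → Finset (Fin 3)) :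
    #(f (.inl 0)) + #(f (.inl 1)) + #(f (.inr (hubEdge 1))) +
      ∑ i ∈ leaves p q, (#(f (.inl i)) + #(f (.inr (hubEdge i)))) ≤ rdfWeight f := by
  have hV : ∑ v, #(f (.inl v)) =
      #(f (.inl 0)) + #(f (.inl 1)) + ∑ i ∈ leaves p q, #(f (.inl i)) := by
    rw [← sum_add_sum_compl {0, 1}, sum_pair zero_ne_one]; rfl
  have hE : #(f (.inr (hubEdge 1))) + ∑ i ∈ leaves p q, #(f (.inr (hubEdge i))) ≤
      ∑ e, #(f (.inr e)) := by
    have hinj : Set.InjOn (hubEdge (p := p) (q := q)) ↑(insert 1 (leaves p q)) :=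
      hubEdge_injOn.mono fun i hi => by rintro rfl; simp at hi
    calc _ = ∑ i ∈ insert 1 (leaves p q), #(f (.inr (hubEdge i))) :=
          (sum_insert (by simp)).symm
      _ = ∑ e ∈ (insert 1 (leaves p q)).image hubEdge, #(f (.inr e)) :=
          (sum_image (f := fun e => #(f (.inr e))) hinj).symm
      _ ≤ _ := sum_le_sum_of_subset (subset_univ _)
  rw [rdfWeight, Fintype.sum_sum_type, hV, sum_add_distrib]
  omega

variable {f : Fin (p + q + 2) ⊕ (doubleStar p q).edgeSet → Finset (Fin 3)}

theorem three_le_card_hubEdge_of_leaf (hf : IsRDF (middleGraph (doubleStar p q)) 3 f)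
    {l : Fin (p + q + 2)} (hl : l ∈ leaves p q) (h : f (.inl l) = ∅) :
    3 ≤ #(f (.inr (hubEdge l))) := by
  refine (hf.le_sum_card h fun u hu => ?_).trans_eq (sum_singleton _ _)
  rcases u with v | e
  · simp at hu
  · obtain ⟨i, -, rfl⟩ := exists_hubEdge_eq e
    rcases Sym2.mem_iff.1 hu with hl' | rfl
    · exact absurd (hl' ▸ hl) (hub_notMem_leaves i)
    · exact mem_singleton_self _

theorem three_le_of_center (hf : IsRDF (middleGraph (doubleStar p q)) 3 f)
    {v : Fin (p + q + 2)} (hv : v ∉ leaves p q) (h : f (.inl v) = ∅) :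
    3 ≤ #(f (.inr (hubEdge 1))) +
      ∑ i ∈ leaves p q with hub i = v, #(f (.inr (hubEdge i))) := by
  have hN : ∀ u, (middleGraph (doubleStar p q)).Adj (.inl v) u →
      u ∈ (insert 1 {i ∈ leaves p q | hub i = v}).image (.inr ∘ hubEdge) := by
    rintro (w | e) hu
    · simp at hu
    · obtain ⟨i, hi, rfl⟩ := exists_hubEdge_eq e
      refine mem_image_of_mem _ ?_
      by_cases h1 : i = 1
      · exact h1 ▸ mem_insert_self _ _
      · have hil : i ∈ leaves p q := mem_leaves.2 ⟨hi, h1⟩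
        rcases Sym2.mem_iff.1 hu with rfl | rfl
        · exact mem_insert_of_mem (mem_filter.2 ⟨hil, rfl⟩)
        · exact absurd hil hv
  calc 3 ≤ _ := hf.le_sum_card h hN
    _ ≤ _ := sum_image_le_of_nonneg fun _ _ => Nat.zero_le _
    _ = _ := sum_insert (by simp)

theorem three_le_of_hubEdge_one (hf : IsRDF (middleGraph (doubleStar p q)) 3 f)
    (h : f (.inr (hubEdge 1)) = ∅) :
    3 ≤ #(f (.inl 0)) + #(f (.inl 1)) + ∑ i ∈ leaves p q, #(f (.inr (hubEdge i))) := by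
  have hN : ∀ u, (middleGraph (doubleStar p q)).Adj (.inr (hubEdge 1)) u →
      u ∈ insert (.inl 0) (insert (.inl 1) ((leaves p q).image (.inr ∘ hubEdge))) := by
    rintro (w | e) hu
    · simpa [hubEdge, hub_one, or_comm] using hu
    · obtain ⟨i, hi, rfl⟩ := exists_hubEdge_eq e
      have h1 : i ≠ 1 := by rintro rfl; exact hu.1 rfl
      exact mem_insert_of_mem (mem_insert_of_mem (mem_image_of_mem _ (mem_leaves.2 ⟨hi, h1⟩)))
  calc 3 ≤ _ := hf.le_sum_card h hN
    _ ≤ _ := by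
      rw [sum_insert (by simp), sum_insert (by simp)]
      have := sum_image_le_of_nonneg (s := leaves p q) (g := .inr ∘ hubEdge)
        (f := fun u => #(f u)) fun _ _ => Nat.zero_le _
      dsimp only [Function.comp] at this
      omega

theorem one_add_min_le_of_leaf (hf : IsRDF (middleGraph (doubleStar p q)) 3 f)
    {l : Fin (p + q + 2)} (hl : l ∈ leaves p q) :
    1 + min #(f (.inr (hubEdge l))) 2 ≤ #(f (.inl l)) + #(f (.inr (hubEdge l))) := by
  by_cases h : f (.inl l) = ∅
  · have := three_le_card_hubEdge_of_leaf hf hl h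
    rw [h, card_empty]
    omega
  · have := card_pos.2 (nonempty_iff_ne_empty.2 h)
    omega

theorem le_rdfWeight [Fintype (doubleStar p q).edgeSet]
    (hf : IsRDF (middleGraph (doubleStar p q)) 3 f) : p + q + 3 ≤ rdfWeight f := by
  have hleaves := sum_le_sum fun i hi => one_add_min_le_of_leaf hf hi
  rw [sum_add_distrib, sum_const, card_leaves, smul_eq_mul, mul_one,
    sum_leaves_eq fun i => min #(f (.inr (hubEdge i))) 2] at hleaves
  have hmin v :=
    min_sum_le_sum_min {i ∈ leaves p q | hub i = v} (fun i => #(f (.inr (hubEdge i)))) 2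
  have hmin0 := hmin 0
  have hmin1 := hmin 1
  have hcenter0 (h : #(f (.inl 0)) = 0) := three_le_of_center hf (by simp) (card_eq_zero.1 h)
  have hcenter1 (h : #(f (.inl 1)) = 0) := three_le_of_center hf (by simp) (card_eq_zero.1 h)
  have hcentral (h : #(f (.inr (hubEdge 1))) = 0) :=
    three_le_of_hubEdge_one hf (card_eq_zero.1 h)
  rw [sum_leaves_eq] at hcentral
  have := sum_le_rdfWeight f
  omega

end DoubleStar

theorem stmt17_general (p q : ℕ) :
    mrdn (doubleStar p q) 3 = p + q + 3 := by
  classical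
  refine rdn_eq_of_isRDF (isRDF_dominatingEdgeRDF 0 DoubleStar.hubEdge_one_meets) ?_
    fun g hg => DoubleStar.le_rdfWeight hg
  rw [rdfWeight_dominatingEdgeRDF, Fintype.card_fin]
  omega

/-- For `p, q ≥ 1`, `γ*_{r3}(DS_{p,q}) = p + q + 3`. -/
theorem stmt17 (p q : ℕ) (hp : 1 ≤ p) (hq : 1 ≤ q) :
    mrdn (doubleStar p q) 3 = p + q + 3 :=
  stmt17_general p q
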